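/- The χ gate family achieves the 2-design parameters: let k_x = π/4 − (1/8)·arccos(1/5), k_y = π/8, k_z = (1/8)·arccos(1/5). Then cos(4k_x) + cos(4k_y) + cos(4k_z) = 0 and cos(4k_x)cos(4k_y) + cos(4k_y)cos(4k_z) + cos(4k_z)cos(4k_x) = −3/5; consequently a(k_x,k_y,k_z) = 3/5 and c(k_x,k_y,k_z) = 1/5. -/
import Mathlib


/-- The parameter `a(kx,ky,kz)` of the second-moment matrix of the ironed gadget built from
a two-qubit gate with KAK coefficients `(kx,ky,kz)` (Eq. (eq:abc) of the paper). -/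
noncomputable def aKAK (kx ky kz : ℝ) : ℝ :=
  (1/9) * (6 + Real.cos (4*kx) * Real.cos (4*ky) + Real.cos (4*kx) * Real.cos (4*kz) +
    Real.cos (4*ky) * Real.cos (4*kz))

/-- The parameter `c(kx,ky,kz)` of the second-moment matrix of the ironed gadget built from
a two-qubit gate with KAK coefficients `(kx,ky,kz)` (Eq. (eq:abc) of the paper). -/
noncomputable def cKAK (kx ky kz : ℝ) : ℝ :=
  (1/12) * (3 + Real.cos (4*kx) * Real.cos (4*ky) + Real.cos (4*ky) * Real.cos (4*kz) +
    Real.cos (4*kz) * Real.cos (4*kx)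
    - 2 * (Real.cos (4*kx) + Real.cos (4*ky) + Real.cos (4*kz)))

/-- **The χ gate family achieves the 2-design parameters**: for the KAK coefficients
`kx = π/4 − (1/8)·arccos(1/5)`, `ky = π/8`, `kz = (1/8)·arccos(1/5)`, the sums
`Σ cos(4k) = 0` and `Σ pairwise products = −3/5`, so that `a = 3/5` and `c = 1/5`. -/
theorem chi_gate_parameters :
    let kx : ℝ := Real.pi / 4 - (1/8) * Real.arccos (1/5)
    let ky : ℝ := Real.pi / 8
    let kz : ℝ := (1/8) * Real.arccos (1/5)
    Real.cos (4*kx) + Real.cos (4*ky) + Real.cos (4*kz) = 0 ∧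
    Real.cos (4*kx) * Real.cos (4*ky) + Real.cos (4*ky) * Real.cos (4*kz) +
      Real.cos (4*kz) * Real.cos (4*kx) = -3/5 ∧
    aKAK kx ky kz = 3/5 ∧
    cKAK kx ky kz = 1/5 := by
  intro kx ky kz
  set t := Real.arccos (1/5) with ht
  have h4x : 4 * kx = Real.pi - t / 2 := by simp only [kx]; ring
  have h4y : 4 * ky = Real.pi / 2 := by simp only [ky]; ring
  have h4z : 4 * kz = t / 2 := by simp only [kz]; ring
  have hy : Real.cos (4 * ky) = 0 := by rw [h4y, Real.cos_pi_div_two]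
  have hx : Real.cos (4 * kx) = - Real.cos (t / 2) := by
    rw [h4x, Real.cos_pi_sub]
  have hz : Real.cos (4 * kz) = Real.cos (t / 2) := by rw [h4z]
  have hsq : Real.cos (t / 2) ^ 2 = 3 / 5 := by
    have h := Real.cos_sq (t / 2)
    rw [show 2 * (t / 2) = t by ring, ht,
      Real.cos_arccos (by norm_num) (by norm_num)] at h
    rw [h]; norm_num
  refine ⟨by rw [hx, hy, hz]; ring, ?_, ?_, ?_⟩
  · rw [hx, hy, hz]; nlinarith [hsq]
  · rw [aKAK, hx, hy, hz]; nlinarith [hsq]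
  · rw [cKAK, hx, hy, hz]; nlinarith [hsq]
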